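/- arXiv:1103.0163 — 2 statements merged into one kernel-verified Lean document; each statement's English description precedes it below -/
import Mathlib

section
/- Let A, B : X → ℝ be functions on a set X with B ≥ 0, and for λ ∈ [δ₀,1] set f_λ = A − λB and c_λ = inf_{γ∈Γ} sup_{t∈[0,1]} f_λ(γ(t)) over a fixed nonempty family Γ of paths, assuming each sup is finite. Suppose moreover that for each γ ∈ Γ, sup_t B(γ(t)) < ∞. Then λ ↦ c_λ is continuous from the left on (δ₀, 1]. -/
open Set Filter Topology unitInterval

/-!
Each path `γ` gives a level function `λ ↦ sup_t f_λ(γ t)`. It is antitone because `B ≥ 0`,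
and Lipschitz because `B` is bounded along `γ`. Hence `c_λ`, their infimum, is antitone and
upper semicontinuous, and such a function is continuous from the left: for `μ < λ`
monotonicity gives `c_λ ≤ c_μ`, while upper semicontinuity bounds `c_μ` from above by
anything larger than `c_λ`.
-/

theorem Antitone.tendsto_nhdsLT_of_upperSemicontinuousWithinAt {α β : Type*} [Preorder α]
    [TopologicalSpace α] [LinearOrder β] [TopologicalSpace β] [OrderTopology β] {f : α → β}
    {x : α} (hf : Antitone f) (hfx : UpperSemicontinuousWithinAt f (Iio x) x) :
    Tendsto f (𝓝[<] x) (𝓝 (f x)) := by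
  refine tendsto_order.2 ⟨fun a ha => ?_, hfx⟩
  filter_upwards [self_mem_nhdsWithin] with y hy
  exact ha.trans_le (hf (le_of_lt hy))

section SupSubMul

variable {ι : Type*} {a b : ι → ℝ}

lemma bddAbove_range_sub_mul (ha : BddAbove (range a)) {M : ℝ} (hb : ∀ i, |b i| ≤ M)
    (s : ℝ) :
    BddAbove (range fun i => a i - s * b i) := by
  obtain ⟨A, hA⟩ := ha
  refine ⟨A + |s| * M, ?_⟩
  rintro _ ⟨i, rfl⟩
  have hai : a i ≤ A := hA ⟨i, rfl⟩
  have hsb : -(s * b i) ≤ |s| * M := calc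
    -(s * b i) ≤ |s * b i| := neg_le_abs _
    _ = |s| * |b i| := abs_mul s (b i)
    _ ≤ |s| * M := mul_le_mul_of_nonneg_left (hb i) (abs_nonneg s)
  linarith

lemma lipschitzWith_ciSup_sub_mul [Nonempty ι] (ha : BddAbove (range a)) {M : ℝ}
    (hb : ∀ i, |b i| ≤ M) : LipschitzWith M.toNNReal fun s => ⨆ i, (a i - s * b i) := by
  refine LipschitzWith.of_le_add_mul' M fun s r => ciSup_le fun i => ?_
  have hr : a i - r * b i ≤ ⨆ j, (a j - r * b j) := le_ciSup (bddAbove_range_sub_mul ha hb r) i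
  have hsr : (r - s) * b i ≤ M * dist s r := calc
    (r - s) * b i ≤ |(r - s) * b i| := le_abs_self _
    _ = |b i| * dist s r := by rw [abs_mul, mul_comm, Real.dist_eq, abs_sub_comm]
    _ ≤ M * dist s r := mul_le_mul_of_nonneg_right (hb i) dist_nonneg
  linarith

lemma continuous_iSup_coe_sub_mul [Nonempty ι] (ha : BddAbove (range a))
    (hb : Bornology.IsBounded (range b)) :
    Continuous fun s : ℝ => ⨆ i, ((a i - s * b i : ℝ) : EReal) := by
  obtain ⟨M, hM⟩ := isBounded_iff_forall_norm_le.1 hb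
  have hbM : ∀ i, |b i| ≤ M := fun i => hM _ ⟨i, rfl⟩
  have hcoe : ∀ s : ℝ,
      ⨆ i, ((a i - s * b i : ℝ) : EReal) = ((⨆ i, (a i - s * b i) : ℝ) : EReal) :=
    fun s => (Monotone.map_ciSup_of_continuousAt continuous_coe_real_ereal.continuousAt
      EReal.coe_strictMono.monotone (bddAbove_range_sub_mul ha hbM s)).symm
  simp only [hcoe]
  exact continuous_coe_real_ereal.comp (lipschitzWith_ciSup_sub_mul ha hbM).continuous

lemma antitone_iSup_coe_sub_mul (hb : ∀ i, 0 ≤ b i) :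
    Antitone fun s : ℝ => ⨆ i, ((a i - s * b i : ℝ) : EReal) :=
  fun _ _ hsr => iSup_mono fun i => EReal.coe_le_coe_iff.2 <| by
    nlinarith [mul_le_mul_of_nonneg_right hsr (hb i)]

end SupSubMul

theorem stmt4_general {X : Type*} [NormedAddCommGroup X]
    (A B : X → ℝ) (hB : ∀ u : X, 0 ≤ B u)
    (δ₀ : ℝ) (Γ : Set C(unitInterval, X))
    (hAbdd : ∀ γ ∈ Γ, BddAbove (Set.range fun t : unitInterval => A (γ t)))
    (hBbdd : ∀ γ ∈ Γ, BddAbove (Set.range fun t : unitInterval => B (γ t)))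
    (c : ℝ → EReal)
    (hc : ∀ lam : ℝ, c lam = ⨅ γ ∈ Γ, ⨆ t : unitInterval, ((A (γ t) - lam * B (γ t) : ℝ) : EReal)) :
    ∀ lam : ℝ, lam ∈ Ioc δ₀ 1 →
      Tendsto c (nhdsWithin lam (Iio lam)) (nhds (c lam)) := by
  intro lam _
  have hBγ : ∀ γ ∈ Γ, Bornology.IsBounded (range fun t : unitInterval => B (γ t)) :=
    fun γ hγ => isBounded_iff_bddBelow_bddAbove.2
      ⟨⟨0, by rintro _ ⟨t, rfl⟩; exact hB _⟩, hBbdd γ hγ⟩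
  have hanti : Antitone c := by
    rw [funext hc]
    exact fun _ _ hsr => iInf₂_mono fun γ _ => antitone_iSup_coe_sub_mul (fun t => hB (γ t)) hsr
  have husc : UpperSemicontinuous c := by
    rw [funext hc]
    exact upperSemicontinuous_biInf fun γ hγ =>
      (continuous_iSup_coe_sub_mul (hAbdd γ hγ) (hBγ γ hγ)).upperSemicontinuous
  exact hanti.tendsto_nhdsLT_of_upperSemicontinuousWithinAt (husc.upperSemicontinuousWithinAt _ lam)

/-- Left continuity of the minimax levels: if `f_λ = A - λB` with `B ≥ 0` bounded along
each path of `Γ` (and `A` bounded above along each path, so each sup is finite), then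
`λ ↦ c_λ` is continuous from the left on `(δ₀, 1]`. -/
theorem stmt4 {X : Type*} [NormedAddCommGroup X] [NormedSpace ℝ X]
    (A B : X → ℝ) (hB : ∀ u : X, 0 ≤ B u)
    (δ₀ : ℝ) (hδ₀ : 0 < δ₀) (hδ₀1 : δ₀ < 1)
    (w : X) (Γ : Set C(unitInterval, X))
    (hΓ : Γ = {γ : C(unitInterval, X) | γ 0 = 0 ∧ γ 1 = w})
    (hΓne : Γ.Nonempty)
    (hAbdd : ∀ γ ∈ Γ, BddAbove (Set.range fun t : unitInterval => A (γ t)))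
    (hBbdd : ∀ γ ∈ Γ, BddAbove (Set.range fun t : unitInterval => B (γ t)))
    (c : ℝ → EReal)
    (hc : ∀ lam : ℝ, c lam = ⨅ γ ∈ Γ, ⨆ t : unitInterval, ((A (γ t) - lam * B (γ t) : ℝ) : EReal)) :
    ∀ lam : ℝ, lam ∈ Ioc δ₀ 1 →
      Tendsto c (nhdsWithin lam (Iio lam)) (nhds (c lam)) :=
  stmt4_general A B hB δ₀ Γ hAbdd hBbdd c hc
end

section
/- Let j : ℝ × [0,∞) → [0,∞) satisfy j(s,t) ≤ β t^p, let G satisfy ∫_{ℝ^N} (δ₀ G(z) − (M/p) z^p) dx > 0 for some z ∈ W^{1,p}(ℝ^N) and δ₀ ∈ (0,1), and let V satisfy 0 < m ≤ V ≤ M. Define f_λ(u) = ∫ j(u,|Du|) + ∫ V(|x|)|u|^p/p − λ∫ G(u) and η(t)(x) = z(x/t) for t > 0, η(0) = 0. Then for all λ ∈ [δ₀,1] and t > 0: f_λ(η(t)) ≤ β t^{N−p} ‖Dz‖_{L^p}^p − t^N ∫ (δ₀ G(z) − (M/p) z^p), and hence there exists t₀ > 0, independent of λ, with f_λ(η(t₀))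 < 0. -/
open Set Filter Topology MeasureTheory

lemma fderiv_comp_smul' {E : Type*} [NormedAddCommGroup E] [NormedSpace ℝ E]
    (z : E → ℝ) (hz : Differentiable ℝ z) (c : ℝ) (x : E) :
    fderiv ℝ (fun y => z (c • y)) x = c • fderiv ℝ z (c • x) := by
  have hL : (fun y : E => z (c • y)) = z ∘ (c • ContinuousLinearMap.id ℝ E) := by
    ext y; simp
  rw [hL, fderiv_comp x (hz.differentiableAt) ((c • ContinuousLinearMap.id ℝ E).differentiableAt),
    ContinuousLinearMap.fderiv]
  ext v
  simp

set_option maxHeartbeats 1000000 in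
/-- Mountain pass geometry along the dilation curve `η(t)(x) = z(x/t)`:
`f_λ(η(t)) ≤ β t^(N-p)‖Dz‖_p^p - t^N ∫ (δ₀ G(z) - (M/p)z^p)` for all `λ ∈ [δ₀,1]` and
`t > 0`, and hence there is `t₀ > 0`, independent of `λ`, with `f_λ(η(t₀)) < 0`. -/
theorem stmt15 (N : ℕ) (p β m M δ₀ : ℝ) (hp : 1 < p) (hpN : p < N) (hβ : 0 < β)
    (hm : 0 < m) (hmM : m ≤ M) (hδ₀ : 0 < δ₀) (hδ₀1 : δ₀ < 1)
    (j : ℝ → ℝ → ℝ) (hj_nonneg : ∀ s t : ℝ, 0 ≤ t → 0 ≤ j s t)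
    (hj : ∀ s t : ℝ, 0 ≤ t → j s t ≤ β * t ^ p)
    (V : ℝ → ℝ) (hV : ∀ r : ℝ, 0 ≤ r → m ≤ V r ∧ V r ≤ M)
    (G : ℝ → ℝ) (hG_nonneg : ∀ s, 0 ≤ G s)
    (z : EuclideanSpace ℝ (Fin N) → ℝ) (hz : Differentiable ℝ z)
    (hzgrad : Integrable (fun x => ‖fderiv ℝ z x‖ ^ p))
    (hzpos : 0 < ∫ x, (δ₀ * G (z x) - M / p * |z x| ^ p))
    (f : ℝ → (EuclideanSpace ℝ (Fin N) → ℝ) → ℝ)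
    (hf : ∀ lam : ℝ, ∀ u : EuclideanSpace ℝ (Fin N) → ℝ,
      f lam u = (∫ x, j (u x) ‖fderiv ℝ u x‖) + (∫ x, V ‖x‖ * |u x| ^ p / p)
        - lam * ∫ x, G (u x))
    (η : ℝ → EuclideanSpace ℝ (Fin N) → ℝ)
    (hη : ∀ t : ℝ, 0 < t → ∀ x, η t x = z (t⁻¹ • x))
    (hjint : ∀ t : ℝ, 0 < t →
      Integrable (fun x => j (η t x) ‖fderiv ℝ (η t) x‖))
    (hVint : ∀ t : ℝ, 0 < t → Integrable (fun x => V ‖x‖ * |η t x| ^ p / p))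
    (hGint : ∀ t : ℝ, 0 < t → Integrable (fun x => G (η t x)))
    (hzpint : Integrable (fun x => |z x| ^ p))
    (hGzint : Integrable (fun x => G (z x))) :
    (∀ lam ∈ Icc δ₀ 1, ∀ t : ℝ, 0 < t →
      f lam (η t) ≤ β * t ^ ((N : ℝ) - p) * (∫ x, ‖fderiv ℝ z x‖ ^ p)
        - t ^ (N : ℝ) * ∫ x, (δ₀ * G (z x) - M / p * |z x| ^ p)) ∧
    ∃ t₀ : ℝ, 0 < t₀ ∧ ∀ lam ∈ Icc δ₀ 1, f lam (η t₀) < 0 := by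
  have hp0 : (0:ℝ) < p := lt_trans one_pos hp
  set K : ℝ := ∫ x, ‖fderiv ℝ z x‖ ^ p with hKdef
  set I : ℝ := ∫ x, (δ₀ * G (z x) - M / p * |z x| ^ p) with hIdef
  set Z : ℝ := ∫ x, |z x| ^ p with hZdef
  set Gz : ℝ := ∫ x, G (z x) with hGzdef
  have hK0 : 0 ≤ K := integral_nonneg fun x => Real.rpow_nonneg (norm_nonneg _) p
  have hGz0 : 0 ≤ Gz := integral_nonneg fun x => hG_nonneg _
  have hfr : Module.finrank ℝ (EuclideanSpace ℝ (Fin N)) = N := finrank_euclideanSpace_fin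
  have hIsplit : I = δ₀ * Gz - M / p * Z := by
    rw [hIdef, integral_sub (hGzint.const_mul δ₀) (hzpint.const_mul (M / p)),
      integral_const_mul, integral_const_mul]
  have main : ∀ lam ∈ Icc δ₀ 1, ∀ t : ℝ, 0 < t →
      f lam (η t) ≤ β * t ^ ((N : ℝ) - p) * K - t ^ (N : ℝ) * I := by
    intro lam hlam t ht
    have hc : (0:ℝ) < t⁻¹ := inv_pos.2 ht
    have hT : (0:ℝ) < t ^ N := pow_pos ht N
    have htp : (0:ℝ) < t ^ p := Real.rpow_pos_of_pos ht p
    have hηt : η t = fun x => z (t⁻¹ • x) := funext (hη t ht)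
    have hDn : ∀ x, ‖fderiv ℝ (η t) x‖ = t⁻¹ * ‖fderiv ℝ z (t⁻¹ • x)‖ := by
      intro x
      rw [hηt, fderiv_comp_smul' z hz t⁻¹ x, norm_smul, Real.norm_eq_abs, abs_of_pos hc]
    -- G term
    have hGscale : (∫ x, G (η t x)) = t ^ N * Gz := by
      rw [hηt]
      have := MeasureTheory.Measure.integral_comp_inv_smul_of_nonneg
        (volume : Measure (EuclideanSpace ℝ (Fin N))) (fun x => G (z x)) ht.le
      simpa [hfr, smul_eq_mul] using this
    -- V term
    have hVscale : (∫ x, M / p * |z (t⁻¹ • x)| ^ p) = t ^ N * (M / p * Z) := by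
      have := MeasureTheory.Measure.integral_comp_inv_smul_of_nonneg
        (volume : Measure (EuclideanSpace ℝ (Fin N))) (fun x => M / p * |z x| ^ p) ht.le
      rw [hfr, smul_eq_mul] at this
      rw [this, integral_const_mul]
    have hVRint : Integrable (fun x => M / p * |z (t⁻¹ • x)| ^ p) :=
      (hzpint.comp_smul (inv_ne_zero ht.ne')).const_mul _
    have hVle : (∫ x, V ‖x‖ * |η t x| ^ p / p) ≤ t ^ N * (M / p * Z) := by
      rw [← hVscale]
      refine integral_mono (hVint t ht) hVRint fun x => ?_
      rw [hηt]
      have h1 : V ‖x‖ ≤ M := (hV ‖x‖ (norm_nonneg x)).2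
      have h2 : (0:ℝ) ≤ |z (t⁻¹ • x)| ^ p := Real.rpow_nonneg (abs_nonneg _) p
      calc V ‖x‖ * |z (t⁻¹ • x)| ^ p / p ≤ M * |z (t⁻¹ • x)| ^ p / p := by gcongr
        _ = M / p * |z (t⁻¹ • x)| ^ p := by ring
    -- j term
    have hJscale : (∫ x, β * (t⁻¹) ^ p * ‖fderiv ℝ z (t⁻¹ • x)‖ ^ p)
        = β * (t⁻¹) ^ p * (t ^ N * K) := by
      rw [integral_const_mul]
      have := MeasureTheory.Measure.integral_comp_inv_smul_of_nonneg
        (volume : Measure (EuclideanSpace ℝ (Fin N))) (fun x => ‖fderiv ℝ z x‖ ^ p) ht.le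
      rw [hfr, smul_eq_mul] at this
      rw [this]
    have hJRint : Integrable (fun x => β * (t⁻¹) ^ p * ‖fderiv ℝ z (t⁻¹ • x)‖ ^ p) :=
      (hzgrad.comp_smul (inv_ne_zero ht.ne')).const_mul _
    have hJle : (∫ x, j (η t x) ‖fderiv ℝ (η t) x‖) ≤ β * (t⁻¹) ^ p * (t ^ N * K) := by
      rw [← hJscale]
      refine integral_mono (hjint t ht) hJRint fun x => ?_
      have h1 := hj (η t x) _ (norm_nonneg (fderiv ℝ (η t) x))
      rw [hDn x] at h1 ⊢
      calc j (η t x) (t⁻¹ * ‖fderiv ℝ z (t⁻¹ • x)‖)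
          ≤ β * (t⁻¹ * ‖fderiv ℝ z (t⁻¹ • x)‖) ^ p := by
            simpa [hDn x] using hj (η t x) _ (norm_nonneg (fderiv ℝ (η t) x))
        _ = β * (t⁻¹) ^ p * ‖fderiv ℝ z (t⁻¹ • x)‖ ^ p := by
            rw [Real.mul_rpow hc.le (norm_nonneg _), mul_assoc]
    -- combine
    have hGle : δ₀ * (t ^ N * Gz) ≤ lam * ∫ x, G (η t x) := by
      rw [hGscale]
      exact mul_le_mul_of_nonneg_right hlam.1 (by positivity)
    rw [hf lam (η t)]
    have hfinal : β * (t⁻¹) ^ p * (t ^ N * K) + t ^ N * (M / p * Z) - δ₀ * (t ^ N * Gz)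
        = β * t ^ ((N : ℝ) - p) * K - t ^ (N : ℝ) * I := by
      rw [Real.rpow_sub ht, Real.rpow_natCast, Real.inv_rpow ht.le, hIsplit]
      field_simp
      ring
    linarith [hJle, hVle, hGle]
  refine ⟨main, ?_⟩
  have hb0 : (0:ℝ) < β * K / I + 1 := by positivity
  set t₀ : ℝ := (β * K / I + 1) ^ (1 / p) with ht₀def
  have ht₀ : 0 < t₀ := Real.rpow_pos_of_pos hb0 _
  have ht₀p : t₀ ^ p = β * K / I + 1 := by
    rw [ht₀def, ← Real.rpow_mul hb0.le, one_div_mul_cancel hp0.ne', Real.rpow_one]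
  refine ⟨t₀, ht₀, fun lam hlam => ?_⟩
  have h := main lam hlam t₀ ht₀
  have hNp : t₀ ^ (N : ℝ) = t₀ ^ ((N : ℝ) - p) * t₀ ^ p := by
    rw [← Real.rpow_add ht₀, sub_add_cancel]
  have hIne : I ≠ 0 := hzpos.ne'
  have htpI : t₀ ^ p * I = β * K + I := by
    rw [ht₀p]; field_simp
  have hpow : (0:ℝ) < t₀ ^ ((N : ℝ) - p) := Real.rpow_pos_of_pos ht₀ _
  have : β * t₀ ^ ((N : ℝ) - p) * K - t₀ ^ (N : ℝ) * I = t₀ ^ ((N : ℝ) - p) * (-I) := by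
    rw [hNp]; nlinarith [htpI]
  nlinarith [hzpos, hpow, h, this]
end
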